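/- Let J > 0 and let 0 < P₁ < P₂ < S₂ < S₁ satisfy J(S₂ − P₂) = −(S₁ − P₁) + log(S₁/P₁) and J(S₁ − P₁) = −(S₂ − P₂) + log(S₂/P₂). Then (1/P₁ − 1)(1/P₂ − 1) + (1/S₁ − 1)(1/S₂ − 1) ≥ 2J². -/

import Mathlib

/-!
Since `t ≤ sinh t` for `t ≥ 0`, taking `t = log (s / p)` gives the trapezoidal bound
`log (s / p) ≤ (s - p) (1/p + 1/s) / 2` for `0 < p ≤ s`. Plugged into the two fixed-point equations
this yields `J b ≤ a C₁` and `J a ≤ b C₂` with `a = S₁ - P₁`, `b = S₂ - P₂` and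
`Cᵢ = (1/Pᵢ + 1/Sᵢ)/2 - 1`; multiplying gives `J² ≤ C₁ C₂`. Finally, with `uᵢ = 1/Pᵢ - 1` and
`vᵢ = 1/Sᵢ - 1`, we have `u₁u₂ + v₁v₂ = 2 C₁ C₂ + (u₁ - v₁)(u₂ - v₂)/2`, and the last term is
nonnegative because `Pᵢ < Sᵢ`.
-/

open Real

theorem Real.log_le_sub_inv_div_two {x : ℝ} (hx : 1 ≤ x) : log x ≤ (x - x⁻¹) / 2 := by
  rw [← sinh_log (by linarith)]
  exact self_le_sinh_iff.2 (log_nonneg hx)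

theorem Real.log_div_le_mul_add_inv {p s : ℝ} (hp : 0 < p) (hps : p ≤ s) :
    log (s / p) ≤ (s - p) * (p⁻¹ + s⁻¹) / 2 := by
  have hs : 0 < s := hp.trans_le hps
  calc log (s / p) ≤ (s / p - (s / p)⁻¹) / 2 :=
        log_le_sub_inv_div_two ((one_le_div hp).2 hps)
    _ = (s - p) * (p⁻¹ + s⁻¹) / 2 := by field_simp; ring

theorem mul_le_of_eq_neg_add_log_div {J b p s : ℝ} (hp : 0 < p) (hps : p ≤ s)
    (h : J * b = -(s - p) + log (s / p)) :
    J * b ≤ (s - p) * ((1 / p + 1 / s) / 2 - 1) := by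
  have := log_div_le_mul_add_inv hp hps
  simp only [one_div]
  linarith

theorem sq_le_mul_of_mul_le_mul_of_mul_le_mul {J a b c d : ℝ} (hJ : 0 ≤ J) (ha : 0 < a)
    (hb : 0 < b) (h₁ : J * b ≤ a * c) (h₂ : J * a ≤ b * d) : J ^ 2 ≤ c * d := by
  have h : J ^ 2 * (a * b) ≤ c * d * (a * b) := by
    calc J ^ 2 * (a * b) = (J * b) * (J * a) := by ring
      _ ≤ (a * c) * (b * d) :=
        mul_le_mul h₁ h₂ (by positivity) ((by positivity : 0 ≤ J * b).trans h₁)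
      _ = c * d * (a * b) := by ring
  exact le_of_mul_le_mul_right h (mul_pos ha hb)

theorem stmt_19 (J P₁ P₂ S₂ S₁ : ℝ) (hJ : 0 < J)
    (hP₁ : 0 < P₁) (h₁₂ : P₁ < P₂) (h₂₃ : P₂ < S₂) (h₃₄ : S₂ < S₁)
    (hA : J * (S₂ - P₂) = -(S₁ - P₁) + Real.log (S₁ / P₁))
    (hB : J * (S₁ - P₁) = -(S₂ - P₂) + Real.log (S₂ / P₂)) :
    2 * J ^ 2 ≤ (1 / P₁ - 1) * (1 / P₂ - 1) + (1 / S₁ - 1) * (1 / S₂ - 1) := by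
  have hP₂ : 0 < P₂ := hP₁.trans h₁₂
  have hPS₁ : P₁ < S₁ := by linarith
  have hJC : J ^ 2 ≤ ((1 / P₁ + 1 / S₁) / 2 - 1) * ((1 / P₂ + 1 / S₂) / 2 - 1) :=
    sq_le_mul_of_mul_le_mul_of_mul_le_mul hJ.le (sub_pos.2 hPS₁) (sub_pos.2 h₂₃)
      (mul_le_of_eq_neg_add_log_div hP₁ hPS₁.le hA) (mul_le_of_eq_neg_add_log_div hP₂ h₂₃.le hB)
  have hD : 0 ≤ (1 / P₁ - 1 / S₁) * (1 / P₂ - 1 / S₂) :=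
    mul_nonneg (sub_nonneg.2 (one_div_le_one_div_of_le hP₁ hPS₁.le))
      (sub_nonneg.2 (one_div_le_one_div_of_le hP₂ h₂₃.le))
  calc 2 * J ^ 2
      ≤ 2 * (((1 / P₁ + 1 / S₁) / 2 - 1) * ((1 / P₂ + 1 / S₂) / 2 - 1))
        + (1 / P₁ - 1 / S₁) * (1 / P₂ - 1 / S₂) / 2 := by linarith
    _ = (1 / P₁ - 1) * (1 / P₂ - 1) + (1 / S₁ - 1) * (1 / S₂ - 1) := by ring
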